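/- arXiv:2510.13007 — 3 statements merged into one kernel-verified Lean document; each statement's English description precedes it below -/
import Mathlib

section
/- Let M be a monoid and let r, r_ss, r_bs, r_sb, t₁, t₂, k₁, k₂ be elements of M, and let σ₁, σ₂ be invertible elements of M. Assume the following identities hold in M: (RTT) r·t₁·t₂ = t₂·t₁·r; (RTT') σ₂⁻¹·r_bs·t₁ = t₁·r_bs·σ₂⁻¹; (RTT'') σ₁⁻¹·r_sb·t₂ = t₂·r_sb·σ₁⁻¹; (RTT''') r_ss·σ₁⁻¹·σ₂⁻¹ = σ₂⁻¹·σ₁⁻¹·r_ss; (commutation of distinct tensor legs) k₁·σ₂ = σ₂·k₁, k₁·t₂ = t₂·k₁, k₂·σ₁ = σ₁·k₂, k₂·t₁ = t₁·k₂; and the reflection equation k₂·r_sb·k₁·r = r_ss·k₁·r_bs·k₂. Then the conjugated elements s̃₁ := σ₁⁻¹·k₁·t₁ and s̃₂ := σ₂⁻¹·k₂·t₂ again satisfy the reflection equation: s̃₂·r_sb·s̃₁·r = r_ss·s̃₁·r_bs·s̃₂. -/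
/-!
Write `sᵢ` for `σᵢ⁻¹`. In `s₂ k₂ t₂ r_sb s₁ k₁ t₁ r`, the RTT relation for `t₂` and `s₁` and the
commutation of distinct legs gather `s₂ s₁` at the front and `t₂ t₁ r` at the back; RTT turns
`t₂ t₁ r` into `r t₁ t₂`, which exposes `k₂ r_sb k₁ r`. After the reflection equation, the same
moves in reverse (RTT for `s₂ s₁` and for `s₂`, `t₁`) redistribute the `s` and `t` factors.
-/

section Semigroup

variable {M : Type*} [Semigroup M]

def ReflectionEquation (r r_ss r_bs r_sb k₁ k₂ : M) : Prop :=
  k₂ * r_sb * k₁ * r = r_ss * k₁ * r_bs * k₂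

theorem ReflectionEquation.dress {r r_ss r_bs r_sb k₁ k₂ : M} (t₁ t₂ s₁ s₂ : M)
    (hRTT : r * t₁ * t₂ = t₂ * t₁ * r)
    (hRTT' : s₂ * r_bs * t₁ = t₁ * r_bs * s₂)
    (hRTT'' : s₁ * r_sb * t₂ = t₂ * r_sb * s₁)
    (hRTT''' : r_ss * s₁ * s₂ = s₂ * s₁ * r_ss)
    (hc₁ : Commute k₁ s₂) (hc₂ : Commute k₁ t₂) (hc₃ : Commute k₂ s₁) (hc₄ : Commute k₂ t₁)
    (hrefl : ReflectionEquation r r_ss r_bs r_sb k₁ k₂) :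
    ReflectionEquation r r_ss r_bs r_sb (s₁ * k₁ * t₁) (s₂ * k₂ * t₂) :=
  calc s₂ * k₂ * t₂ * r_sb * (s₁ * k₁ * t₁) * r
      = s₂ * k₂ * (s₁ * r_sb * t₂) * k₁ * t₁ * r := by rw [hRTT'']; simp only [mul_assoc]
    _ = s₂ * (s₁ * k₂) * r_sb * (k₁ * t₂) * t₁ * r := by
        rw [← hc₃.eq, hc₂.eq]; simp only [mul_assoc]
    _ = s₂ * s₁ * k₂ * r_sb * k₁ * (r * t₁ * t₂) := by rw [hRTT]; simp only [mul_assoc]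
    _ = s₂ * s₁ * (r_ss * k₁ * r_bs * k₂) * t₁ * t₂ := by
        rw [← hrefl]; simp only [mul_assoc]
    _ = r_ss * s₁ * s₂ * k₁ * r_bs * (t₁ * k₂) * t₂ := by
        rw [hRTT''', ← hc₄.eq]; simp only [mul_assoc]
    _ = r_ss * s₁ * (k₁ * s₂) * r_bs * t₁ * k₂ * t₂ := by rw [hc₁.eq]; simp only [mul_assoc]
    _ = r_ss * s₁ * k₁ * (t₁ * r_bs * s₂) * k₂ * t₂ := by rw [← hRTT']; simp only [mul_assoc]
    _ = r_ss * (s₁ * k₁ * t₁) * r_bs * (s₂ * k₂ * t₂) := by simp only [mul_assoc]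

end Semigroup

/-- If `{S_F(u)}` solves the reflection equation, then so does
`T_{F^σ}(−u)⁻¹ · S_F(u) · T_F(u)`, formalized abstractly in a monoid. -/
theorem conjugated_reflection_equation {M : Type*} [Monoid M]
    (r r_ss r_bs r_sb t₁ t₂ k₁ k₂ : M) (σ₁ σ₂ : Mˣ)
    (hRTT : r * t₁ * t₂ = t₂ * t₁ * r)
    (hRTT' : (↑σ₂⁻¹ : M) * r_bs * t₁ = t₁ * r_bs * (↑σ₂⁻¹ : M))
    (hRTT'' : (↑σ₁⁻¹ : M) * r_sb * t₂ = t₂ * r_sb * (↑σ₁⁻¹ : M))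
    (hRTT''' : r_ss * (↑σ₁⁻¹ : M) * (↑σ₂⁻¹ : M) = (↑σ₂⁻¹ : M) * (↑σ₁⁻¹ : M) * r_ss)
    (hc₁ : k₁ * (↑σ₂ : M) = (↑σ₂ : M) * k₁)
    (hc₂ : k₁ * t₂ = t₂ * k₁)
    (hc₃ : k₂ * (↑σ₁ : M) = (↑σ₁ : M) * k₂)
    (hc₄ : k₂ * t₁ = t₁ * k₂)
    (hrefl : k₂ * r_sb * k₁ * r = r_ss * k₁ * r_bs * k₂) :
    ((↑σ₂⁻¹ : M) * k₂ * t₂) * r_sb * ((↑σ₁⁻¹ : M) * k₁ * t₁) * r =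
      r_ss * ((↑σ₁⁻¹ : M) * k₁ * t₁) * r_bs * ((↑σ₂⁻¹ : M) * k₂ * t₂) :=
  ReflectionEquation.dress t₁ t₂ _ _ hRTT hRTT' hRTT'' hRTT'''
    (Commute.units_inv_right hc₁) hc₂ (Commute.units_inv_right hc₃) hc₄ hrefl
end

section
/- Fix ℓ ≥ 1 and work with ℓ²×ℓ² matrices over a commutative ring R containing an element ħ, with rows and columns indexed by pairs (a,b) ∈ {1,…,ℓ}². Let P be the flip matrix, P_{(a,b),(c,d)} = 1 if a = d and b = c and 0 otherwise; let J be the ℓ×ℓ exchange matrix, J_{ij} = 1 if i + j = ℓ + 1 and 0 otherwise; set J₁ = J ⊗ 1_ℓ and J₂ = 1_ℓ ⊗ J (Kronecker products), and let R(w) = w·1 − ħ·P for a scalar w (Yang's R-matrix in polynomial form). Then for all u₁, u₂ ∈ R the reflection equation J₂ · R(u₁+u₂) · J₁ · R(u₁−u₂) = R(u₁−u₂) · J₁ · R(u₁+u₂) · J₂ holds. -/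
open Kronecker

/-- The flip (permutation) matrix `P` on `R^ℓ ⊗ R^ℓ`:
`P_{(a,b),(c,d)} = 1` if `a = d` and `b = c`, and `0` otherwise. -/
def flipP (R : Type*) [CommRing R] (ℓ : ℕ) :
    Matrix (Fin ℓ × Fin ℓ) (Fin ℓ × Fin ℓ) R :=
  Matrix.of fun p q => if p.1 = q.2 ∧ p.2 = q.1 then 1 else 0

/-- The `ℓ×ℓ` exchange matrix `J`: `J_{ij} = 1` if `i + j = ℓ + 1` (1-based
indexing), and `0` otherwise. -/
def exchJ (R : Type*) [CommRing R] (ℓ : ℕ) : Matrix (Fin ℓ) (Fin ℓ) R :=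
  Matrix.of fun i j => if ((i : ℕ) + 1) + ((j : ℕ) + 1) = ℓ + 1 then 1 else 0

/-!
Both `J₁ = J ⊗ 1` and `J₂ = 1 ⊗ J` are involutions, they commute, and the flip intertwines them:
`P J₁ = J₂ P`, `P J₂ = J₁ P`. Hence `J₂ R(w) J₁ = w J₁J₂ - ħP = J₁ R(w) J₂`, and since `J₁J₂`
commutes with `P` this sandwich commutes with `R(w')`; the reflection equation is exactly
`(J₂ R(u₁+u₂) J₁) R(u₁-u₂) = R(u₁-u₂) (J₁ R(u₁+u₂) J₂)`.
-/

section Intertwining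

variable {R A : Type*} [CommRing R] [Ring A] [Algebra R A] {J J' J₁ J₂ P : A}

theorem mul_smul_one_sub_smul_mul (hJ : J * J = 1) (hPJ : P * J = J' * P) (w h : R) :
    J' * (w • 1 - h • P) * J = w • (J' * J) - h • P := by
  have hsandwich : J' * P * J = P := by rw [← hPJ, mul_assoc, hJ, mul_one]
  simp only [mul_sub, sub_mul, mul_smul_comm, smul_mul_assoc, mul_one, hsandwich]

theorem reflection_equation_of_intertwining (hJ₁ : J₁ * J₁ = 1) (hJ₂ : J₂ * J₂ = 1)
    (hJ : Commute J₁ J₂) (hPJ₁ : P * J₁ = J₂ * P) (hPJ₂ : P * J₂ = J₁ * P) (a b h : R) :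
    J₂ * (a • 1 - h • P) * J₁ * (b • 1 - h • P) =
      (b • 1 - h • P) * J₁ * (a • 1 - h • P) * J₂ := by
  have hKP : Commute (J₁ * J₂) P := by
    rw [commute_iff_eq, mul_assoc, ← hPJ₁, ← mul_assoc, ← hPJ₂, mul_assoc, ← hJ.eq]
  have hSP : Commute (a • (J₁ * J₂) - h • P) P :=
    (hKP.smul_left a).sub_left ((Commute.refl P).smul_left h)
  have hS : Commute (a • (J₁ * J₂) - h • P) (b • 1 - h • P) :=
    ((Commute.one_right _).smul_right b).sub_right (hSP.smul_right h)
  calc J₂ * (a • 1 - h • P) * J₁ * (b • 1 - h • P)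
      = (a • (J₁ * J₂) - h • P) * (b • 1 - h • P) := by
        rw [mul_smul_one_sub_smul_mul hJ₁ hPJ₁, hJ.eq]
    _ = (b • 1 - h • P) * (a • (J₁ * J₂) - h • P) := hS.eq
    _ = (b • 1 - h • P) * J₁ * (a • 1 - h • P) * J₂ := by
        rw [mul_assoc, mul_assoc, ← mul_assoc J₁, mul_smul_one_sub_smul_mul hJ₂ hPJ₂]

end Intertwining

theorem PEquiv.toMatrix_prodComm_mul_kronecker {α m n m' n' : Type*} [CommSemiring α]
    [Fintype m] [Fintype n] [Fintype m'] [Fintype n']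
    [DecidableEq m] [DecidableEq n] [DecidableEq m'] [DecidableEq n']
    (A : Matrix n n' α) (B : Matrix m m' α) :
    ((Equiv.prodComm m n).toPEquiv.toMatrix : Matrix (m × n) (n × m) α) * (A ⊗ₖ B) =
      (B ⊗ₖ A) * ((Equiv.prodComm m' n').toPEquiv.toMatrix : Matrix (m' × n') (n' × m') α) := by
  rw [PEquiv.toMatrix_toPEquiv_mul, PEquiv.mul_toMatrix_toPEquiv]
  ext
  simp [mul_comm]

theorem Matrix.commute_kronecker_one_one_kronecker {α m n : Type*} [CommSemiring α]
    [Fintype m] [Fintype n] [DecidableEq m] [DecidableEq n]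
    (A : Matrix m m α) (B : Matrix n n α) :
    Commute (A ⊗ₖ (1 : Matrix n n α)) ((1 : Matrix m m α) ⊗ₖ B) := by
  rw [Commute, SemiconjBy, ← mul_kronecker_mul, ← mul_kronecker_mul]
  simp only [Matrix.one_mul, Matrix.mul_one]

section ExchangeAndFlip

variable (R : Type*) [CommRing R] (ℓ : ℕ)

theorem exchJ_eq_permMatrix : exchJ R ℓ = Fin.revPerm.permMatrix R := by
  ext i j
  simp only [exchJ, Matrix.of_apply, PEquiv.toMatrix_apply, Equiv.toPEquiv_apply,
    Option.mem_some_iff, Fin.revPerm_apply, Fin.ext_iff, Fin.val_rev]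
  have hi := i.isLt
  exact if_congr (by omega) rfl rfl

theorem exchJ_mul_self : exchJ R ℓ * exchJ R ℓ = 1 := by
  have hrev : (Fin.revPerm : Equiv.Perm (Fin ℓ)) * Fin.revPerm = 1 := by ext; simp
  rw [exchJ_eq_permMatrix, ← Matrix.permMatrix_mul, hrev, Matrix.permMatrix_one]

theorem flipP_eq_permMatrix :
    flipP R ℓ = (Equiv.prodComm (Fin ℓ) (Fin ℓ)).toPEquiv.toMatrix := by
  ext p q
  simp only [flipP, Matrix.of_apply, PEquiv.toMatrix_apply, Equiv.toPEquiv_apply,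
    Option.mem_some_iff, Prod.ext_iff, Equiv.prodComm_apply, Prod.fst_swap, Prod.snd_swap,
    eq_comm, and_comm]

theorem flipP_mul_kronecker (A B : Matrix (Fin ℓ) (Fin ℓ) R) :
    flipP R ℓ * (A ⊗ₖ B) = (B ⊗ₖ A) * flipP R ℓ := by
  rw [flipP_eq_permMatrix, PEquiv.toMatrix_prodComm_mul_kronecker]

end ExchangeAndFlip

theorem reflection_equation_exchange_general (R : Type*) [CommRing R] (ℓ : ℕ)
    (hb : R) (u₁ u₂ : R) :
    letI J₁ : Matrix (Fin ℓ × Fin ℓ) (Fin ℓ × Fin ℓ) R :=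
      exchJ R ℓ ⊗ₖ (1 : Matrix (Fin ℓ) (Fin ℓ) R)
    letI J₂ : Matrix (Fin ℓ × Fin ℓ) (Fin ℓ × Fin ℓ) R :=
      (1 : Matrix (Fin ℓ) (Fin ℓ) R) ⊗ₖ exchJ R ℓ
    letI Rm : R → Matrix (Fin ℓ × Fin ℓ) (Fin ℓ × Fin ℓ) R :=
      fun w => w • (1 : Matrix (Fin ℓ × Fin ℓ) (Fin ℓ × Fin ℓ) R) - hb • flipP R ℓ
    J₂ * Rm (u₁ + u₂) * J₁ * Rm (u₁ - u₂) =
      Rm (u₁ - u₂) * J₁ * Rm (u₁ + u₂) * J₂ := by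
  have hJ := exchJ_mul_self R ℓ
  apply reflection_equation_of_intertwining
  · rw [← Matrix.mul_kronecker_mul, hJ, Matrix.one_mul, Matrix.one_kronecker_one]
  · rw [← Matrix.mul_kronecker_mul, hJ, Matrix.one_mul, Matrix.one_kronecker_one]
  · exact Matrix.commute_kronecker_one_one_kronecker _ _
  · exact flipP_mul_kronecker R ℓ _ _
  · exact flipP_mul_kronecker R ℓ _ _

/-- with `J₁ = J ⊗ 1`, `J₂ = 1 ⊗ J` and Yang's R-matrix
`R(w) = w·1 − ħ·P` in polynomial form, the reflection equation
`J₂·R(u₁+u₂)·J₁·R(u₁−u₂) = R(u₁−u₂)·J₁·R(u₁+u₂)·J₂` holds. -/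
theorem reflection_equation_exchange (R : Type*) [CommRing R] (ℓ : ℕ) (hℓ : 1 ≤ ℓ)
    (hb : R) (u₁ u₂ : R) :
    letI J₁ : Matrix (Fin ℓ × Fin ℓ) (Fin ℓ × Fin ℓ) R :=
      exchJ R ℓ ⊗ₖ (1 : Matrix (Fin ℓ) (Fin ℓ) R)
    letI J₂ : Matrix (Fin ℓ × Fin ℓ) (Fin ℓ × Fin ℓ) R :=
      (1 : Matrix (Fin ℓ) (Fin ℓ) R) ⊗ₖ exchJ R ℓ
    letI Rm : R → Matrix (Fin ℓ × Fin ℓ) (Fin ℓ × Fin ℓ) R :=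
      fun w => w • (1 : Matrix (Fin ℓ × Fin ℓ) (Fin ℓ × Fin ℓ) R) - hb • flipP R ℓ
    J₂ * Rm (u₁ + u₂) * J₁ * Rm (u₁ - u₂) =
      Rm (u₁ - u₂) * J₁ * Rm (u₁ + u₂) * J₂ :=
  reflection_equation_exchange_general R ℓ hb u₁ u₂
end

section
/- Fix ℓ ≥ 2 and w₁ ≥ 1, and encode a symplectic-type Young tableau by a function f : {1,…,w₁} → {1,…,ℓ}. Then there is no triple (k,l,a) with l ≠ k satisfying condition (28) if and only if f(k) = 1 for every k ∈ {1,…,w₁}; consequently the charge satisfies l_Sp(T) = 0 if and only if f ≡ 1, and there is exactly one tableau of charge zero. -/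
/-- Number of columns of the row `k` of the tableau: rows `k > 0` have one
node, rows `k < 0` have `ℓ − 1` nodes. -/
def numCols (ℓ : ℕ) (k : ℤ) : ℕ := if 0 < k then 1 else ℓ - 1

/-- The entry `T(k,a)` of the tableau encoded by `f`: for `k > 0` the single
entry of row `k` is `f(k)`; for `k < 0` row `k` is the increasing enumeration
of `{1,…,ℓ} \ {f(−k)}`, whose `a`-th entry is `a` if `a < f(−k)` and `a + 1`
otherwise. -/
def entryT (f : ℤ → ℕ) (k : ℤ) (a : ℕ) : ℕ :=
  if 0 < k then f k else if a < f (-k) then a else a + 1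

/-- `k` indexes a row of the tableau: `k ∈ {−w₁,…,−1,1,…,w₁}`. -/
def IsRow (w₁ : ℕ) (k : ℤ) : Prop := k ≠ 0 ∧ |k| ≤ (w₁ : ℤ)

/-- Condition (28) of the paper for the triple `(k, l, a)`: `k`, `l` are rows
with `l ≠ k`, `a` is a column of row `k`, `T(l,a) < T(k,a)` when `l < k`,
`T(l,a+1) < T(k,a)` when `l > k` (failing if row `l` has no node in column
`a+1`), and the entry `T(k,a)` does not appear in row `l`. -/
def Cond28 (ℓ w₁ : ℕ) (f : ℤ → ℕ) (k l : ℤ) (a : ℕ) : Prop :=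
  IsRow w₁ k ∧ IsRow w₁ l ∧ l ≠ k ∧ 1 ≤ a ∧ a ≤ numCols ℓ k ∧
  (l < k → entryT f l a < entryT f k a) ∧
  (k < l → a + 1 ≤ numCols ℓ l ∧ entryT f l (a + 1) < entryT f k a) ∧
  (∀ b : ℕ, 1 ≤ b → b ≤ numCols ℓ l → entryT f l b ≠ entryT f k a)

/-- The charge `l_Sp(T)`: the number of triples `(k, −k, a)` satisfying (28)
plus half the number of triples `(k, l, a)` with `l ≠ ±k` satisfying (28). -/
noncomputable def lSp (ℓ w₁ : ℕ) (f : ℤ → ℕ) : ℕ :=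
  {p : ℤ × ℕ | Cond28 ℓ w₁ f p.1 (-p.1) p.2}.ncard +
    {p : ℤ × ℤ × ℕ | p.2.1 ≠ -p.1 ∧ Cond28 ℓ w₁ f p.1 p.2.1 p.2.2}.ncard / 2

/-!
If `f ≡ 1` then every positive row is `(1)` and every negative row is `(2, …, ℓ)`, so
`T(k,a) = 1` for `k > 0` and `T(k,a) = a + 1` for `k < 0`; the strict inequalities in (28)
can then never hold. Conversely, if `f(k) ≥ 2` for some `k > 0`, the triple `(k, −k, 1)`
satisfies (28): row `−k` omits exactly `f(k)` and its first entry is `1 < f(k)`. Such a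
triple is counted with full weight in `l_Sp`, so the charge is positive.
-/

variable {ℓ w₁ : ℕ} {f : ℤ → ℕ}

lemma isRow_of_pos {k : ℤ} (h1 : 1 ≤ k) (h2 : k ≤ (w₁ : ℤ)) : IsRow w₁ k :=
  ⟨by omega, by rw [abs_of_pos (by omega)]; exact h2⟩

lemma IsRow.neg {k : ℤ} (hk : IsRow w₁ k) : IsRow w₁ (-k) :=
  ⟨neg_ne_zero.mpr hk.1, by rw [abs_neg]; exact hk.2⟩

lemma entryT_eq_of_forall_eq_one (h1 : ∀ k : ℤ, 1 ≤ k → k ≤ (w₁ : ℤ) → f k = 1)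
    {k : ℤ} (hk : IsRow w₁ k) {a : ℕ} (ha : 1 ≤ a) :
    entryT f k a = if 0 < k then 1 else a + 1 := by
  have hk0 := hk.1
  have hkw := abs_le.mp hk.2
  unfold entryT
  split_ifs with hpos hlt
  · exact h1 k hpos hkw.2
  · rw [h1 (-k) (by omega) (by omega)] at hlt
    omega
  · rfl

lemma not_cond28_of_forall_eq_one (h1 : ∀ k : ℤ, 1 ≤ k → k ≤ (w₁ : ℤ) → f k = 1)
    (k l : ℤ) (a : ℕ) : ¬ Cond28 ℓ w₁ f k l a := by
  rintro ⟨hk, hl, hlk, ha, -, hlt, hgt, -⟩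
  have hk0 := hk.1
  have hl0 := hl.1
  rcases hlk.lt_or_gt with h | h
  · have hval := hlt h
    rw [entryT_eq_of_forall_eq_one h1 hk ha, entryT_eq_of_forall_eq_one h1 hl ha] at hval
    split_ifs at hval <;> omega
  · obtain ⟨hcol, hval⟩ := hgt h
    rw [entryT_eq_of_forall_eq_one h1 hk ha,
      entryT_eq_of_forall_eq_one h1 hl (by omega)] at hval
    unfold numCols at hcol
    split_ifs at hval hcol <;> omega

lemma cond28_neg_one_of_two_le {k : ℤ} (h1 : 1 ≤ k) (h2 : k ≤ (w₁ : ℤ)) (hfk : 2 ≤ f k) :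
    Cond28 ℓ w₁ f k (-k) 1 := by
  have hk : 0 < k := by omega
  have ek : entryT f k 1 = f k := if_pos hk
  have el (b : ℕ) : entryT f (-k) b = if b < f k then b else b + 1 := by
    rw [entryT, if_neg (by omega), neg_neg]
  refine ⟨isRow_of_pos h1 h2, (isRow_of_pos h1 h2).neg, by omega, le_rfl,
    by rw [numCols, if_pos hk], fun _ => ?_, fun h => absurd h (by omega), ?_⟩
  · rw [ek, el, if_pos (by omega)]
    omega
  · intro b _ _ heq
    rw [ek, el] at heq
    split_ifs at heq <;> omega

lemma finite_setOf_cond28_neg :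
    {p : ℤ × ℕ | Cond28 ℓ w₁ f p.1 (-p.1) p.2}.Finite := by
  refine ((Set.finite_Icc (-(w₁ : ℤ)) w₁).prod (Set.finite_Iic (ℓ + 1))).subset ?_
  rintro ⟨k, a⟩ ⟨hk, -, -, -, ha, -⟩
  dsimp only at ha
  have hcols : numCols ℓ k ≤ ℓ + 1 := by unfold numCols; split <;> omega
  exact ⟨Set.mem_Icc.mpr (abs_le.mp hk.2), Set.mem_Iic.mpr (ha.trans hcols)⟩

lemma lSp_eq_zero_of_forall_not_cond28 (h : ∀ k l a, ¬ Cond28 ℓ w₁ f k l a) :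
    lSp ℓ w₁ f = 0 := by
  have hA : {p : ℤ × ℕ | Cond28 ℓ w₁ f p.1 (-p.1) p.2} = ∅ :=
    Set.eq_empty_of_forall_notMem fun p => h _ _ _
  have hB : {p : ℤ × ℤ × ℕ | p.2.1 ≠ -p.1 ∧ Cond28 ℓ w₁ f p.1 p.2.1 p.2.2} = ∅ :=
    Set.eq_empty_of_forall_notMem fun p hp => h _ _ _ hp.2
  simp [lSp, hA, hB]

lemma lSp_pos_of_cond28_neg {k : ℤ} {a : ℕ} (h : Cond28 ℓ w₁ f k (-k) a) :
    0 < lSp ℓ w₁ f := by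
  have hA : 0 < {p : ℤ × ℕ | Cond28 ℓ w₁ f p.1 (-p.1) p.2}.ncard :=
    (Set.ncard_pos finite_setOf_cond28_neg).mpr ⟨(k, a), h⟩
  unfold lSp
  omega

section

variable (hf : ∀ k : ℤ, 1 ≤ k → k ≤ (w₁ : ℤ) → 1 ≤ f k)
include hf

lemma not_exists_cond28_iff :
    (¬ ∃ (k l : ℤ) (a : ℕ), Cond28 ℓ w₁ f k l a) ↔
      ∀ k : ℤ, 1 ≤ k → k ≤ (w₁ : ℤ) → f k = 1 := by
  refine ⟨fun hno k h1 h2 => ?_, fun h1 ⟨k, l, a, h⟩ => not_cond28_of_forall_eq_one h1 k l a h⟩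
  by_contra hne
  exact hno ⟨k, -k, 1, cond28_neg_one_of_two_le h1 h2 (by have := hf k h1 h2; omega)⟩

lemma lSp_eq_zero_iff :
    lSp ℓ w₁ f = 0 ↔ ∀ k : ℤ, 1 ≤ k → k ≤ (w₁ : ℤ) → f k = 1 := by
  refine ⟨fun hz k h1 h2 => ?_,
    fun h1 => lSp_eq_zero_of_forall_not_cond28 (not_cond28_of_forall_eq_one h1)⟩
  by_contra hne
  have := lSp_pos_of_cond28_neg (ℓ := ℓ) (f := f)
    (cond28_neg_one_of_two_le h1 h2 (by have := hf k h1 h2; omega))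
  omega

end

theorem charge_zero_iff_unique_general (ℓ w₁ : ℕ) (hℓ : 2 ≤ ℓ)
    (f : ℤ → ℕ) (hf : ∀ k : ℤ, 1 ≤ k → k ≤ (w₁ : ℤ) → 1 ≤ f k ∧ f k ≤ ℓ) :
    ((¬ ∃ (k l : ℤ) (a : ℕ), Cond28 ℓ w₁ f k l a) ↔
      ∀ k : ℤ, 1 ≤ k → k ≤ (w₁ : ℤ) → f k = 1) ∧
    (lSp ℓ w₁ f = 0 ↔ ∀ k : ℤ, 1 ≤ k → k ≤ (w₁ : ℤ) → f k = 1) ∧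
    (∃ f₀ : ℤ → ℕ, (∀ k : ℤ, 1 ≤ k → k ≤ (w₁ : ℤ) → 1 ≤ f₀ k ∧ f₀ k ≤ ℓ) ∧
      lSp ℓ w₁ f₀ = 0 ∧
      ∀ f' : ℤ → ℕ, (∀ k : ℤ, 1 ≤ k → k ≤ (w₁ : ℤ) → 1 ≤ f' k ∧ f' k ≤ ℓ) →
        lSp ℓ w₁ f' = 0 →
        ∀ k : ℤ, 1 ≤ k → k ≤ (w₁ : ℤ) → f' k = f₀ k) := by
  have hf₁ k h1 h2 := (hf k h1 h2).1
  refine ⟨not_exists_cond28_iff hf₁, lSp_eq_zero_iff hf₁, fun _ => 1,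
    fun _ _ _ => ⟨le_rfl, one_le_two.trans hℓ⟩, ?_, fun f' hf' hz => ?_⟩
  · exact (lSp_eq_zero_iff fun _ _ _ => le_rfl).2 fun _ _ _ => rfl
  · exact (lSp_eq_zero_iff fun k h1 h2 => (hf' k h1 h2).1).1 hz

/-- no triple `(k, l, a)` with `l ≠ k` satisfies condition (28)
iff `f(k) = 1` for every `k ∈ {1,…,w₁}`; consequently `l_Sp(T) = 0` iff
`f ≡ 1`, and there is exactly one tableau of charge zero. -/
theorem charge_zero_iff_unique (ℓ w₁ : ℕ) (hℓ : 2 ≤ ℓ) (hw : 1 ≤ w₁)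
    (f : ℤ → ℕ) (hf : ∀ k : ℤ, 1 ≤ k → k ≤ (w₁ : ℤ) → 1 ≤ f k ∧ f k ≤ ℓ) :
    ((¬ ∃ (k l : ℤ) (a : ℕ), Cond28 ℓ w₁ f k l a) ↔
      ∀ k : ℤ, 1 ≤ k → k ≤ (w₁ : ℤ) → f k = 1) ∧
    (lSp ℓ w₁ f = 0 ↔ ∀ k : ℤ, 1 ≤ k → k ≤ (w₁ : ℤ) → f k = 1) ∧
    (∃ f₀ : ℤ → ℕ, (∀ k : ℤ, 1 ≤ k → k ≤ (w₁ : ℤ) → 1 ≤ f₀ k ∧ f₀ k ≤ ℓ) ∧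
      lSp ℓ w₁ f₀ = 0 ∧
      ∀ f' : ℤ → ℕ, (∀ k : ℤ, 1 ≤ k → k ≤ (w₁ : ℤ) → 1 ≤ f' k ∧ f' k ≤ ℓ) →
        lSp ℓ w₁ f' = 0 →
        ∀ k : ℤ, 1 ≤ k → k ≤ (w₁ : ℤ) → f' k = f₀ k) :=
  charge_zero_iff_unique_general ℓ w₁ hℓ f hf
end
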